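/- arXiv:2103.13046 — 6 statements merged into one kernel-verified Lean document; each statement's English description precedes it below -/
import Mathlib

section
/- For a set Z and a semigroup T, every element of the quotient semigroup S̃(T ⊔ Z) (the free semigroup on the disjoint union of the underlying set of T with Z, modulo identifying the product of two elements of T in the free semigroup with their product in T) has a unique expression of the form a₀t₁a₁t₂⋯tₙaₙ where n ≥ 0, each tᵢ ∈ T, each aᵢ is either a word in the free semigroup S(Z) or the empty word, with the constraints that for n ≥ 2 none of a₁,…,a_{n−1} is empty, and for n = 0 the word a₀ is nonempty. -/
/- Normal forms `a₀ t₁ a₁ ⋯ tₙ aₙ` are the same thing as nonempty alternating lists of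
syllables in `T ⊕ S(Z)`, i.e. lists in which no two adjacent syllables lie on the same side.
Consing a syllable onto such a list, multiplying it into the head when both lie on the same side,
gives an action of `S(T ⊔ Z)` on alternating lists; by associativity in `T` it respects the
defining relation, so it descends to `S̃(T ⊔ Z)`. Acting on the empty list assigns to every
element an alternating list that evaluates back to it, while evaluating an alternating list and
acting with the result on the empty list gives the list back (van der Waerden's trick). -/

namespace Stmt1

variable (T Z : Type*) [Semigroup T]

/-- The defining relation of `S̃(T ⊔ Z)`. -/
def rel : FreeSemigroup (T ⊕ Z) → FreeSemigroup (T ⊕ Z) → Prop := fun x y =>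
  ∃ t t' : T, x = FreeSemigroup.of (Sum.inl t) * FreeSemigroup.of (Sum.inl t') ∧
    y = FreeSemigroup.of (Sum.inl (t * t'))

/-- The smallest semigroup congruence containing the defining relation. -/
def con : Con (FreeSemigroup (T ⊕ Z)) := conGen (rel T Z)

/-- The quotient semigroup `S̃(T ⊔ Z)`. -/
def STilde := (con T Z).Quotient

instance : Semigroup (STilde T Z) := Con.semigroup (con T Z)

/-- The image of `t ∈ T` in `S̃(T ⊔ Z)`. -/
def ofT (t : T) : STilde T Z := ((FreeSemigroup.of (Sum.inl t) : FreeSemigroup (T ⊕ Z)) :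
  (con T Z).Quotient)

/-- The image of a word of `S(Z)` in `S̃(T ⊔ Z)`. -/
def ofW (w : FreeSemigroup Z) : STilde T Z :=
  ((FreeSemigroup.map Sum.inr w : FreeSemigroup (T ⊕ Z)) : (con T Z).Quotient)

/-- Multiplication on `Option S`, with `none` (the empty word) acting as a unit. -/
def optMul {S : Type*} [Semigroup S] : Option S → Option S → Option S
  | none, y => y
  | some a, none => some a
  | some a, some b => some (a * b)

/-- A normal form `a₀ t₁ a₁ t₂ ⋯ tₙ aₙ` : the `tᵢ` lie in `T`, the `aᵢ` are words in `S(Z)`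
or empty (`none`), the interior `a₁, …, a_{n-1}` are nonempty, and `a₀` is nonempty
when `n = 0`. -/
structure NormalForm where
  n : ℕ
  t : Fin n → T
  a : Fin (n + 1) → Option (FreeSemigroup Z)
  interior : ∀ i : Fin (n + 1), 0 < (i : ℕ) → (i : ℕ) < n → (a i).isSome
  base : n = 0 → (a 0).isSome

/-- Evaluation of a normal form in `S̃(T ⊔ Z)` (as an element of `Option (S̃(T ⊔ Z))`;
the constraints guarantee the result is `some`). -/
def NormalForm.eval (nf : NormalForm T Z) : Option (STilde T Z) :=
  ((Option.map (ofW T Z) (nf.a 0)) ::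
      (List.ofFn fun i : Fin nf.n =>
        [some (ofT T Z (nf.t i)), Option.map (ofW T Z) (nf.a i.succ)]).flatten).foldr
    optMul none

end Stmt1

namespace Stmt1

section Syllables
variable {A B : Type*}

def Alternating (l : List (A ⊕ B)) : Prop :=
  l.IsChain fun x y => x.isLeft ≠ y.isLeft

theorem Alternating.tail {x : A ⊕ B} {l : List (A ⊕ B)} (h : Alternating (x :: l)) :
    Alternating l :=
  List.IsChain.tail h

variable [Semigroup A] [Semigroup B]

def mergeCons : A ⊕ B → List (A ⊕ B) → List (A ⊕ B)
  | .inl a, .inl a' :: l => .inl (a * a') :: l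
  | .inr b, .inr b' :: l => .inr (b * b') :: l
  | x, l => x :: l

theorem mergeCons_of_alternating {x : A ⊕ B} {l : List (A ⊕ B)} (h : Alternating (x :: l)) :
    mergeCons x l = x :: l := by
  rcases l with _ | ⟨y, l⟩
  · rcases x <;> rfl
  · rcases x <;> rcases y <;> simp_all [Alternating, mergeCons]

theorem Alternating.mergeCons (x : A ⊕ B) {l : List (A ⊕ B)} (h : Alternating l) :
    Alternating (mergeCons x l) := by
  rcases l with _ | ⟨y, l⟩
  · rcases x <;> exact List.isChain_singleton _
  · rcases x <;> rcases y <;> simp_all [Alternating, Stmt1.mergeCons, List.isChain_cons]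

theorem mergeCons_inl_mergeCons_inl (a a' : A) (l : List (A ⊕ B)) :
    mergeCons (.inl a) (mergeCons (.inl a') l) = mergeCons (.inl (a * a')) l := by
  rcases l with _ | ⟨_ | _, l⟩ <;> simp [mergeCons, mul_assoc]

theorem mergeCons_inr_mergeCons_inr (b b' : B) (l : List (A ⊕ B)) :
    mergeCons (.inr b) (mergeCons (.inr b') l) = mergeCons (.inr (b * b')) l := by
  rcases l with _ | ⟨_ | _, l⟩ <;> simp [mergeCons, mul_assoc]

theorem prod_map_mergeCons {S : Type*} [Semigroup S] (f : A →ₙ* S) (g : B →ₙ* S)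
    (x : A ⊕ B) (l : List (A ⊕ B)) :
    ((mergeCons x l).map fun y => ((Sum.elim f g y : S) : WithOne S)).prod =
      (Sum.elim f g x : S) * (l.map fun y => ((Sum.elim f g y : S) : WithOne S)).prod := by
  rcases l with _ | ⟨y, l⟩
  · rcases x <;> simp [mergeCons]
  · rcases x <;> rcases y <;> simp [mergeCons, mul_assoc]

end Syllables

section Parse
variable {A B : Type*}

/-- `toWord a₀ [(t₁, a₁), …, (tₙ, aₙ)]` is the list of syllables of `a₀ t₁ a₁ ⋯ tₙ aₙ`, where
`none` stands for an empty `aᵢ`. -/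
def toWord : Option B → List (A × Option B) → List (A ⊕ B)
  | o, [] => o.toList.map .inr
  | o, (a, o') :: m => o.toList.map .inr ++ .inl a :: toWord o' m

def parse : List (A ⊕ B) → Option B × List (A × Option B)
  | [] => (none, [])
  | .inr b :: l => (some b, (parse l).2)
  | .inl a :: l => (none, (a, (parse l).1) :: (parse l).2)

theorem toWord_some (b : B) (m : List (A × Option B)) :
    toWord (some b) m = .inr b :: toWord none m := by
  cases m <;> rfl

theorem parse_toWord (o : Option B) (m : List (A × Option B)) : parse (toWord o m) = (o, m) := by
  induction m generalizing o with
  | nil => cases o <;> rfl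
  | cons p m ih =>
    obtain ⟨a, o'⟩ := p
    cases o <;> simp [toWord, parse, ih]

theorem toWord_parse {l : List (A ⊕ B)} (h : Alternating l) :
    toWord (parse l).1 (parse l).2 = l := by
  induction l with
  | nil => rfl
  | cons x l ih =>
    rcases x with a | b
    · simp [parse, toWord, ih h.tail]
    · have hfst : (parse l).1 = none := by
        rcases l with _ | ⟨_ | _, l⟩
        · rfl
        · rfl
        · simp [Alternating] at h
      rw [parse, toWord_some, ← hfst, ih h.tail]

theorem alternating_toWord_iff {o : Option B} {m : List (A × Option B)} :
    Alternating (toWord o m) ↔ m.IsChain fun p _ => p.2.isSome := by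
  induction m generalizing o with
  | nil => cases o <;> simp [toWord, Alternating]
  | cons p m ih =>
    obtain ⟨a, o'⟩ := p
    have hprefix : Alternating (toWord o ((a, o') :: m)) ↔ Alternating (.inl a :: toWord o' m) := by
      cases o <;> simp [toWord, Alternating]
    rw [hprefix, List.isChain_cons, ← ih (o := o'), Alternating, List.isChain_cons]
    refine and_congr_left fun _ => ?_
    rcases o' with _ | b
    · rcases m with _ | ⟨⟨a', o''⟩, m⟩ <;> simp [toWord]
    · simp [toWord_some]

theorem isSome_parse_fst_of_snd_eq_nil {l : List (A ⊕ B)} (hl : l ≠ []) (h : (parse l).2 = []) :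
    (parse l).1.isSome := by
  rcases l with _ | ⟨_ | _, l⟩
  · exact absurd rfl hl
  · simp [parse] at h
  · rfl

end Parse

section Decode
variable {T Z : Type*} [Semigroup T]

variable (T Z) in
def ofTHom : T →ₙ* STilde T Z where
  toFun := ofT T Z
  map_mul' t t' := ((Con.eq _).2 (ConGen.Rel.of _ _ ⟨t, t', rfl, rfl⟩)).symm

variable (T Z) in
def mk : FreeSemigroup (T ⊕ Z) →ₙ* STilde T Z := (con T Z).mkMulHom

variable (T Z) in
def ofWHom : FreeSemigroup Z →ₙ* STilde T Z := (mk T Z).comp (FreeSemigroup.map Sum.inr)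

def syllable : T ⊕ FreeSemigroup Z → STilde T Z := Sum.elim (ofTHom T Z) (ofWHom T Z)

def evalWord (l : List (T ⊕ FreeSemigroup Z)) : WithOne (STilde T Z) :=
  (l.map fun x => (syllable x : WithOne (STilde T Z))).prod

@[simp] theorem evalWord_nil : evalWord ([] : List (T ⊕ FreeSemigroup Z)) = 1 := rfl

theorem evalWord_cons (x : T ⊕ FreeSemigroup Z) (l : List (T ⊕ FreeSemigroup Z)) :
    evalWord (x :: l) = syllable x * evalWord l := List.prod_cons

theorem evalWord_mergeCons (x : T ⊕ FreeSemigroup Z) (l : List (T ⊕ FreeSemigroup Z)) :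
    evalWord (mergeCons x l) = syllable x * evalWord l :=
  prod_map_mergeCons _ _ x l

variable (T Z) in
def reduce : FreeSemigroup (T ⊕ Z) →ₙ* Function.End (List (T ⊕ FreeSemigroup Z)) :=
  FreeSemigroup.lift fun x => mergeCons (x.map id FreeSemigroup.of)

theorem reduce_of (x : T ⊕ Z) (l : List (T ⊕ FreeSemigroup Z)) :
    reduce T Z (.of x) l = mergeCons (x.map id FreeSemigroup.of) l := rfl

theorem reduce_mul (w w' : FreeSemigroup (T ⊕ Z)) (l : List (T ⊕ FreeSemigroup Z)) :
    reduce T Z (w * w') l = reduce T Z w (reduce T Z w' l) := by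
  rw [map_mul]; rfl

theorem con_le_ker_reduce : con T Z ≤ Con.ker (reduce T Z) := by
  refine Con.conGen_le.2 ?_
  rintro _ _ ⟨t, t', rfl, rfl⟩
  funext l
  exact mergeCons_inl_mergeCons_inl t t' l

theorem reduce_map_inr (w : FreeSemigroup Z) (l : List (T ⊕ FreeSemigroup Z)) :
    reduce T Z (FreeSemigroup.map Sum.inr w) l = mergeCons (.inr w) l := by
  induction w generalizing l with
  | ih1 z => rfl
  | ih2 z w _ ih => rw [map_mul, reduce_mul, ih, FreeSemigroup.map_of, reduce_of,
      Sum.map_inr, mergeCons_inr_mergeCons_inr]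

theorem evalWord_reduce (w : FreeSemigroup (T ⊕ Z)) (l : List (T ⊕ FreeSemigroup Z)) :
    evalWord (reduce T Z w l) = mk T Z w * evalWord l := by
  induction w generalizing l with
  | ih1 x => rw [reduce_of, evalWord_mergeCons]; rcases x <;> rfl
  | ih2 x w hx ih => rw [reduce_mul, hx, ih, ← mul_assoc, ← WithOne.coe_mul]; rfl

theorem alternating_reduce (w : FreeSemigroup (T ⊕ Z)) {l : List (T ⊕ FreeSemigroup Z)}
    (hl : Alternating l) : Alternating (reduce T Z w l) := by
  induction w generalizing l with
  | ih1 x => exact hl.mergeCons _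
  | ih2 x w hx ih => rw [reduce_mul]; exact hx (ih hl)

variable (T Z) in
def act : STilde T Z →ₙ* Function.End (List (T ⊕ FreeSemigroup Z)) where
  toFun s := Con.liftOn s (reduce T Z) fun _ _ h => con_le_ker_reduce h
  map_mul' s s' := Con.induction_on₂ s s' fun w w' => map_mul (reduce T Z) w w'

theorem act_syllable (x : T ⊕ FreeSemigroup Z) : act T Z (syllable x) = mergeCons x := by
  rcases x with t | w
  · rfl
  · funext l
    exact reduce_map_inr w l

theorem evalWord_act (s : STilde T Z) : evalWord (act T Z s []) = s :=
  Con.induction_on s fun w => (evalWord_reduce w []).trans (mul_one _)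

theorem alternating_act (s : STilde T Z) : Alternating (act T Z s []) :=
  Con.induction_on s fun w => alternating_reduce w List.isChain_nil

theorem act_ne_nil (s : STilde T Z) : act T Z s [] ≠ [] := fun h => by
  simpa [h] using (evalWord_act s).symm

theorem lift_act_evalWord {l : List (T ⊕ FreeSemigroup Z)} (hl : Alternating l) :
    WithOne.lift (act T Z) (evalWord l) [] = l := by
  induction l with
  | nil => rfl
  | cons x l ih =>
    rw [evalWord_cons, map_mul, WithOne.lift_coe, act_syllable]
    exact (congrArg (mergeCons x) (ih hl.tail)).trans (mergeCons_of_alternating hl)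

end Decode

theorem optMul_eq_mul {S : Type*} [Semigroup S] (x y : WithOne S) : optMul x y = x * y := by
  induction x using WithOne.recOneCoe <;> induction y using WithOne.recOneCoe <;> rfl

section Eval
variable {T Z : Type*} [Semigroup T]

theorem evalWord_append (l l' : List (T ⊕ FreeSemigroup Z)) :
    evalWord (l ++ l') = evalWord l * evalWord l' := by
  rw [evalWord, List.map_append, List.prod_append]; rfl

theorem evalWord_map_inr (o : Option (FreeSemigroup Z)) :
    evalWord (o.toList.map .inr : List (T ⊕ FreeSemigroup Z)) = o.map (ofW T Z) := by
  cases o <;> rfl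

theorem foldr_optMul_eq_evalWord_toWord (o : Option (FreeSemigroup Z))
    (m : List (T × Option (FreeSemigroup Z))) :
    (o.map (ofW T Z) :: (m.map fun p => [some (ofT T Z p.1), p.2.map (ofW T Z)]).flatten).foldr
      optMul none = evalWord (toWord o m) := by
  induction m generalizing o with
  | nil => cases o <;> rfl
  | cons p m ih =>
    simp only [List.map_cons, List.flatten_cons, List.cons_append, List.nil_append,
      List.foldr_cons] at ih ⊢
    rw [ih, toWord, evalWord_append, evalWord_cons, evalWord_map_inr]
    exact (optMul_eq_mul _ _).trans (congrArg _ (optMul_eq_mul _ _))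

end Eval

namespace NormalForm
variable {T Z : Type*}

def toPair (nf : NormalForm T Z) :
    Option (FreeSemigroup Z) × List (T × Option (FreeSemigroup Z)) :=
  (nf.a 0, List.ofFn fun i => (nf.t i, nf.a i.succ))

theorem toPair_injective : Function.Injective (toPair : NormalForm T Z → _) := by
  rintro ⟨n, t, a, _, _⟩ ⟨n', t', a', _, _⟩ h
  simp only [toPair, Prod.mk.injEq, List.ofFn_inj', Sigma.mk.inj_iff] at h
  obtain ⟨h0, rfl, h⟩ := h
  replace h := funext_iff.1 (eq_of_heq h)
  obtain rfl : t = t' := funext fun i => congrArg Prod.fst (h i)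
  obtain rfl : a = a' := funext fun i => Fin.cases h0 (fun i => congrArg Prod.snd (h i)) i
  rfl

theorem isChain_toPair_snd (nf : NormalForm T Z) :
    nf.toPair.2.IsChain fun p _ => p.2.isSome := by
  refine List.isChain_iff_getElem.2 fun i hi => ?_
  simp only [toPair, List.length_ofFn] at hi
  simpa [toPair] using nf.interior ⟨i + 1, by omega⟩ (by simp) (by simp [hi])

theorem exists_toPair_eq {o : Option (FreeSemigroup Z)} {m : List (T × Option (FreeSemigroup Z))}
    (hm : m.IsChain fun p _ => p.2.isSome) (ho : m = [] → o.isSome) :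
    ∃ nf : NormalForm T Z, nf.toPair = (o, m) := by
  refine ⟨⟨m.length, fun i => m[i].1, Fin.cons o fun i => m[i].2, ?_, ?_⟩, ?_⟩
  · intro i hi0 hin
    obtain ⟨j, rfl⟩ := Fin.exists_succ_eq.2 (Fin.pos_iff_ne_zero.1 hi0)
    simpa using hm.getElem j (by simpa using hin)
  · simpa using ho
  · simp [toPair]

def word (nf : NormalForm T Z) : List (T ⊕ FreeSemigroup Z) := toWord nf.toPair.1 nf.toPair.2

theorem word_injective : Function.Injective (word : NormalForm T Z → _) := fun nf nf' h =>
  toPair_injective (by simpa [word, parse_toWord] using congrArg parse h)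

theorem alternating_word (nf : NormalForm T Z) : Alternating nf.word :=
  alternating_toWord_iff.2 nf.isChain_toPair_snd

theorem exists_word_eq {l : List (T ⊕ FreeSemigroup Z)} (hl : Alternating l) (hne : l ≠ []) :
    ∃ nf : NormalForm T Z, nf.word = l := by
  have hparse := toWord_parse hl
  obtain ⟨nf, hnf⟩ :=
    exists_toPair_eq (alternating_toWord_iff.1 (hparse ▸ hl)) (isSome_parse_fst_of_snd_eq_nil hne)
  exact ⟨nf, by simp only [word, hnf, hparse]⟩

theorem eval_eq_evalWord [Semigroup T] (nf : NormalForm T Z) : nf.eval = evalWord nf.word := by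
  rw [word, toPair, ← foldr_optMul_eq_evalWord_toWord, List.map_ofFn]
  rfl

end NormalForm

variable (T Z : Type*) [Semigroup T]

/-- Every element of `S̃(T ⊔ Z)` has a unique expression
`a₀ t₁ a₁ t₂ ⋯ tₙ aₙ` as above. -/
theorem normalForm_unique (s : STilde T Z) :
    ∃! nf : NormalForm T Z, nf.eval = some s := by
  obtain ⟨nf, hnf⟩ := NormalForm.exists_word_eq (alternating_act s) (act_ne_nil s)
  refine ⟨nf, ?_, fun nf' h' => NormalForm.word_injective ?_⟩
  · show nf.eval = some s
    rw [nf.eval_eq_evalWord, hnf, evalWord_act]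
    rfl
  · rw [hnf, ← lift_act_evalWord nf'.alternating_word, ← nf'.eval_eq_evalWord, h']
    rfl

end Stmt1
end

section
/- If Z ↪ Z' is an injective map of sets and T ↪ T' is an injective homomorphism of semigroups, then the induced semigroup homomorphism S̃(T ⊔ Z) → S̃(T' ⊔ Z') is injective. -/
/- Injectivity of the induced map S̃(T ⊔ Z) → S̃(T' ⊔ Z'). -/

namespace Stmt2

variable (T Z : Type*) [Semigroup T]

/-- The defining relation of `S̃(T ⊔ Z)`. -/
def rel : FreeSemigroup (T ⊕ Z) → FreeSemigroup (T ⊕ Z) → Prop := fun x y =>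
  ∃ t t' : T, x = FreeSemigroup.of (Sum.inl t) * FreeSemigroup.of (Sum.inl t') ∧
    y = FreeSemigroup.of (Sum.inl (t * t'))

/-- The smallest semigroup congruence containing the defining relation. -/
def con : Con (FreeSemigroup (T ⊕ Z)) := conGen (rel T Z)

/-- The quotient semigroup `S̃(T ⊔ Z)`. -/
def STilde := (con T Z).Quotient

instance : Semigroup (STilde T Z) := Con.semigroup (con T Z)

/-- The class of a generator `s ∈ T ⊔ Z` in `S̃(T ⊔ Z)`. -/
def ofGen (s : T ⊕ Z) : STilde T Z :=
  ((FreeSemigroup.of s : FreeSemigroup (T ⊕ Z)) : (con T Z).Quotient)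

/-!
A letter `a` of `T ⊔ Z` acts on words by `mergeCons a`: prepend `a`, multiplying it into the
leading letter when both lie in `T`. By associativity of `T` the action kills the defining
relation, so acting by a representative on the empty word gives a well-defined normal form on
`S̃(T ⊔ Z)`. Multiplying out the normal form in `S̃(T ⊔ Z)` recovers the element, so the normal
form is injective; and it commutes with the letterwise map `Sum.map f g`, which is injective on
words.
-/

def STilde.mk (w : FreeSemigroup (T ⊕ Z)) : STilde T Z :=
  (w : (con T Z).Quotient)

variable {T Z}

theorem STilde.mk_mul (u v : FreeSemigroup (T ⊕ Z)) :
    STilde.mk T Z (u * v) = STilde.mk T Z u * STilde.mk T Z v := rfl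

theorem STilde.mk_surjective :
    Function.Surjective (STilde.mk T Z) :=
  Quotient.mk''_surjective

theorem STilde.mk_of (s : T ⊕ Z) :
    STilde.mk T Z (FreeSemigroup.of s) = ofGen T Z s := rfl

def mergeCons : T ⊕ Z → List (T ⊕ Z) → List (T ⊕ Z)
  | Sum.inl t, Sum.inl t' :: l => Sum.inl (t * t') :: l
  | a, l => a :: l

theorem mergeCons_inl_mergeCons_inl (t t' : T) (l : List (T ⊕ Z)) :
    mergeCons (Sum.inl t) (mergeCons (Sum.inl t') l) = mergeCons (Sum.inl (t * t')) l := by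
  rcases l with _ | ⟨_ | _, _⟩ <;> simp [mergeCons, mul_assoc]

def wordAction : FreeSemigroup (T ⊕ Z) →ₙ* Function.End (List (T ⊕ Z)) :=
  FreeSemigroup.lift fun a => (mergeCons a : Function.End (List (T ⊕ Z)))

theorem wordAction_of_mul (a : T ⊕ Z) (w : FreeSemigroup (T ⊕ Z)) (l : List (T ⊕ Z)) :
    wordAction (FreeSemigroup.of a * w) l = mergeCons a (wordAction w l) := by
  rw [map_mul]
  rfl

theorem con_le_ker_wordAction : con T Z ≤ Con.ker (wordAction (T := T) (Z := Z)) := by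
  refine Con.conGen_le.2 ?_
  rintro _ _ ⟨t, t', rfl, rfl⟩
  exact funext fun l => mergeCons_inl_mergeCons_inl t t' l

def normalForm (x : STilde T Z) : List (T ⊕ Z) :=
  Con.liftOn x (fun w => wordAction w []) fun _ _ h => by rw [con_le_ker_wordAction h]

theorem normalForm_mk (w : FreeSemigroup (T ⊕ Z)) :
    normalForm (STilde.mk T Z w) = wordAction w [] := rfl

def evalWord (l : List (T ⊕ Z)) : WithOne (STilde T Z) :=
  (l.map fun a => (ofGen T Z a : WithOne (STilde T Z))).prod

theorem ofGen_inl_mul_ofGen_inl (t t' : T) :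
    ofGen T Z (Sum.inl t) * ofGen T Z (Sum.inl t') = ofGen T Z (Sum.inl (t * t')) :=
  Con.eq _ |>.2 <| ConGen.Rel.of _ _ ⟨t, t', rfl, rfl⟩

theorem evalWord_mergeCons (a : T ⊕ Z) (l : List (T ⊕ Z)) :
    evalWord (mergeCons a l) = ofGen T Z a * evalWord l := by
  rcases a with t | z
  · rcases l with _ | ⟨_ | _, l⟩ <;>
      simp [mergeCons, evalWord, ← ofGen_inl_mul_ofGen_inl, mul_assoc]
  · rfl

theorem evalWord_wordAction (w : FreeSemigroup (T ⊕ Z)) (l : List (T ⊕ Z)) :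
    evalWord (wordAction w l) = STilde.mk T Z w * evalWord l := by
  induction w using FreeSemigroup.recOnMul generalizing l with
  | ih1 a => exact evalWord_mergeCons a l
  | ih2 a w _ ih =>
    rw [wordAction_of_mul, evalWord_mergeCons, ih, STilde.mk_mul, WithOne.coe_mul, STilde.mk_of,
      mul_assoc]

theorem evalWord_normalForm (x : STilde T Z) : evalWord (normalForm x) = x := by
  obtain ⟨w, rfl⟩ := STilde.mk_surjective x
  rw [normalForm_mk, evalWord_wordAction, evalWord, List.map_nil, List.prod_nil, mul_one]

theorem normalForm_injective : Function.Injective (normalForm (T := T) (Z := Z)) := fun x y h =>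
  WithOne.coe_injective <| by rw [← evalWord_normalForm x, h, evalWord_normalForm]

section Map

variable {T' Z' : Type*} [Semigroup T'] (f : T →ₙ* T') (g : Z → Z')

theorem mergeCons_map (a : T ⊕ Z) (l : List (T ⊕ Z)) :
    mergeCons (Sum.map f g a) (l.map (Sum.map f g)) = (mergeCons a l).map (Sum.map f g) := by
  rcases a with _ | _ <;> rcases l with _ | ⟨_ | _, _⟩ <;> simp [mergeCons]

theorem wordAction_map (w : FreeSemigroup (T ⊕ Z)) (l : List (T ⊕ Z)) :
    wordAction (FreeSemigroup.map (Sum.map f g) w) (l.map (Sum.map f g)) =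
      (wordAction w l).map (Sum.map f g) := by
  induction w using FreeSemigroup.recOnMul generalizing l with
  | ih1 a => exact mergeCons_map f g a l
  | ih2 a w _ ih =>
    rw [map_mul, FreeSemigroup.map_of, wordAction_of_mul, wordAction_of_mul, ih, mergeCons_map]

variable {f g}

theorem apply_mk_of_apply_ofGen (F : STilde T Z →ₙ* STilde T' Z')
    (hF : ∀ s : T ⊕ Z, F (ofGen T Z s) = ofGen T' Z' (Sum.map f g s))
    (w : FreeSemigroup (T ⊕ Z)) :
    F (STilde.mk T Z w) = STilde.mk T' Z' (FreeSemigroup.map (Sum.map f g) w) := by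
  induction w using FreeSemigroup.recOnMul with
  | ih1 a => exact hF a
  | ih2 a w _ ih =>
    rw [STilde.mk_mul, map_mul F, ih, map_mul, STilde.mk_mul, STilde.mk_of, hF a,
      FreeSemigroup.map_of, STilde.mk_of]

theorem normalForm_apply_of_apply_ofGen (F : STilde T Z →ₙ* STilde T' Z')
    (hF : ∀ s : T ⊕ Z, F (ofGen T Z s) = ofGen T' Z' (Sum.map f g s)) (x : STilde T Z) :
    normalForm (F x) = (normalForm x).map (Sum.map f g) := by
  obtain ⟨w, rfl⟩ := STilde.mk_surjective x
  rw [apply_mk_of_apply_ofGen F hF, normalForm_mk, normalForm_mk, ← wordAction_map, List.map_nil]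

end Map

/-- If `g : Z ↪ Z'` is an injective map of sets and `f : T ↪ T'` is an
injective semigroup homomorphism, then the induced semigroup homomorphism
`S̃(T ⊔ Z) → S̃(T' ⊔ Z')` (i.e. the unique semigroup homomorphism sending the class of a
generator `s` to the class of `Sum.map f g s`) is injective. -/
theorem induced_injective {T Z T' Z' : Type*} [Semigroup T] [Semigroup T']
    (f : T →ₙ* T') (hf : Function.Injective f)
    (g : Z → Z') (hg : Function.Injective g)
    (F : STilde T Z →ₙ* STilde T' Z')
    (hF : ∀ s : T ⊕ Z, F (ofGen T Z s) = ofGen T' Z' (Sum.map f g s)) :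
    Function.Injective F := by
  intro x y h
  apply normalForm_injective
  apply List.map_injective_iff.2 (hf.sumMap hg)
  rw [← normalForm_apply_of_apply_ofGen F hF, ← normalForm_apply_of_apply_ofGen F hF, h]

end Stmt2
end

section
/- The forgetful functor from operated semigroups to semigroups has a left adjoint. Explicitly, for a semigroup T, define F₀(T) = T and inductively Fₙ(T) = S̃(T ⊔ ⌊F_{n−1}(T)⌋) with the induced injective semigroup homomorphisms F_{n−1}(T) ↪ Fₙ(T); then the colimit F(T) = lim→ Fₙ(T), equipped with the operator sending u ∈ Fₙ(T) to ⌊u⌋ ∈ F_{n+1}(T), is the free operated semigroup generated by the semigroup T: for every operated semigroup (S, P_S) and every semigroup homomorphism θ : T → S, there is a unique morphism of operated semigroups θ̃ : (F(T), P_{F(T)}) → (S, P_S) extending θ. -/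
inductive FreeOp (T : Type u) : Type u
  | of : T → FreeOp T
  | op : FreeOp T → FreeOp T
  | mul : FreeOp T → FreeOp T → FreeOp T

inductive FreeOp.Rel (T : Type u) [Semigroup T] : FreeOp T → FreeOp T → Prop
  | assoc (a b c) : FreeOp.Rel T (.mul (.mul a b) c) (.mul a (.mul b c))
  | of_mul (a b : T) : FreeOp.Rel T (.mul (.of a) (.of b)) (.of (a * b))
  | mul_left {a a'} (b) : FreeOp.Rel T a a' → FreeOp.Rel T (.mul a b) (.mul a' b)
  | mul_right (a) {b b'} : FreeOp.Rel T b b' → FreeOp.Rel T (.mul a b) (.mul a b')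
  | op_congr {a a'} : FreeOp.Rel T a a' → FreeOp.Rel T (.op a) (.op a')

def FreeOpQ (T : Type u) [Semigroup T] : Type u := Quot (FreeOp.Rel T)

variable {T : Type u} [Semigroup T]

def FreeOpQ.mul : FreeOpQ T → FreeOpQ T → FreeOpQ T :=
  Quot.map₂ FreeOp.mul (fun a _ _ h => FreeOp.Rel.mul_right a h)
    (fun _ _ b h => FreeOp.Rel.mul_left b h)

instance FreeOpQ.semigroup : Semigroup (FreeOpQ T) where
  mul := FreeOpQ.mul
  mul_assoc := by
    intro x y z
    induction x using Quot.ind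
    induction y using Quot.ind
    induction z using Quot.ind
    exact Quot.sound (FreeOp.Rel.assoc _ _ _)

def FreeOpQ.P : FreeOpQ T → FreeOpQ T :=
  Quot.map FreeOp.op (fun _ _ h => FreeOp.Rel.op_congr h)

def FreeOpQ.i : T →ₙ* FreeOpQ T where
  toFun t := Quot.mk _ (FreeOp.of t)
  map_mul' a b := (Quot.sound (FreeOp.Rel.of_mul a b)).symm

variable {S : Type v} [Semigroup S] (P_S : S → S) (θ : T →ₙ* S)

def FreeOp.liftFun : FreeOp T → S
  | .of t => θ t
  | .op a => P_S (FreeOp.liftFun a)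
  | .mul a b => FreeOp.liftFun a * FreeOp.liftFun b

theorem FreeOp.liftFun_rel {a b : FreeOp T} (h : FreeOp.Rel T a b) :
    FreeOp.liftFun P_S θ a = FreeOp.liftFun P_S θ b := by
  induction h with
  | assoc a b c => exact mul_assoc _ _ _
  | of_mul a b => exact (θ.map_mul a b).symm
  | mul_left b _ ih => simp [FreeOp.liftFun, ih]
  | mul_right a _ ih => simp [FreeOp.liftFun, ih]
  | op_congr _ ih => simp [FreeOp.liftFun, ih]

def FreeOpQ.lift : @MulHom (FreeOpQ T) S FreeOpQ.semigroup.toMul _ where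
  toFun := Quot.lift (FreeOp.liftFun P_S θ) (fun _ _ h => FreeOp.liftFun_rel P_S θ h)
  map_mul' x y := by
    induction x using Quot.ind
    induction y using Quot.ind
    rfl

theorem free_operated_semigroup_exists (T : Type u) [Semigroup T] :
    ∃ (F : Type u) (sg : Semigroup F) (P : F → F) (i : @MulHom T F _ sg.toMul),
      ∀ (S : Type v) [Semigroup S], ∀ (P_S : S → S) (θ : T →ₙ* S),
        ∃! θt : @MulHom F S sg.toMul _,
          (∀ u : F, θt.toFun (P u) = P_S (θt.toFun u)) ∧
          (∀ t : T, θt.toFun (i.toFun t) = θ t) := by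
  refine ⟨FreeOpQ T, FreeOpQ.semigroup, FreeOpQ.P, FreeOpQ.i, ?_⟩
  intro S _ P_S θ
  refine ⟨FreeOpQ.lift P_S θ, ⟨?_, fun t => rfl⟩, ?_⟩
  · intro u
    induction u using Quot.ind
    rfl
  · rintro g ⟨hP, hi⟩
    ext x
    induction x using Quot.ind with
    | _ w =>
      induction w with
      | of t => exact hi t
      | op a ih =>
        have : Quot.mk (FreeOp.Rel T) (FreeOp.op a) = FreeOpQ.P (Quot.mk _ a) := rfl
        rw [show g.toFun = ⇑g from rfl] at *
        calc g (Quot.mk (FreeOp.Rel T) (FreeOp.op a))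
            = g (FreeOpQ.P (Quot.mk _ a)) := rfl
          _ = P_S (g (Quot.mk _ a)) := hP _
          _ = P_S ((FreeOpQ.lift P_S θ) (Quot.mk _ a)) := by rw [ih]
          _ = _ := rfl
      | mul a b iha ihb =>
        have h1 : g.toFun (Quot.mk (FreeOp.Rel T) (FreeOp.mul a b))
            = g.toFun (Quot.mk _ a) * g.toFun (Quot.mk _ b) :=
          g.map_mul (Quot.mk _ a) (Quot.mk _ b)
        have h2 : (FreeOpQ.lift P_S θ).toFun (Quot.mk (FreeOp.Rel T) (FreeOp.mul a b))
            = (FreeOpQ.lift P_S θ).toFun (Quot.mk _ a) * (FreeOpQ.lift P_S θ).toFun (Quot.mk _ b) :=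
          (FreeOpQ.lift P_S θ).map_mul (Quot.mk _ a) (Quot.mk _ b)
        show g.toFun _ = (FreeOpQ.lift P_S θ).toFun _
        rw [h1, h2]; exact congrArg₂ (· * ·) iha ihb
end

section
/- The forgetful functor from operated semigroups to operated sets has a left adjoint. Explicitly, for an operated set (X, P_X), define F₀(X) = S(X) and inductively Fₙ(X) = S(X ⊔ ⌊F_{n−1}(X) ∖ X⌋), with natural injective semigroup homomorphisms F_{n−1}(X) ↪ Fₙ(X); the colimit F(X), with operator sending i(x) to i(P_X(x)) for x ∈ X and sending any element u not in the image of X to ⌊u⌋, satisfies: for every operated semigroup (T, P_T) and every map of operated sets θ : (X, P_X) → (T, P_T), there is a unique morphism of operated semigroups θ̃ : (F(X), P_{F(X)}) → (T, P_T) extending θ. -/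
inductive OpTree (X : Type u) : Type u
  | var : X → OpTree X
  | op : OpTree X → OpTree X
  | mul : OpTree X → OpTree X → OpTree X

namespace OpTree

inductive Rel {X : Type u} (P_X : X → X) : OpTree X → OpTree X → Prop
  | refl (a) : Rel P_X a a
  | symm {a b} : Rel P_X a b → Rel P_X b a
  | trans {a b c} : Rel P_X a b → Rel P_X b c → Rel P_X a c
  | assoc (a b c) : Rel P_X (mul (mul a b) c) (mul a (mul b c))
  | mul_congr {a b c d} : Rel P_X a b → Rel P_X c d → Rel P_X (mul a c) (mul b d)
  | op_congr {a b} : Rel P_X a b → Rel P_X (op a) (op b)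
  | op_var (x : X) : Rel P_X (op (var x)) (var (P_X x))

variable {X : Type u} {P_X : X → X}

def eval {T : Type v} [Semigroup T] (P_T : T → T) (θ : X → T) : OpTree X → T
  | var x => θ x
  | op u => P_T (eval P_T θ u)
  | mul a b => eval P_T θ a * eval P_T θ b

theorem eval_rel {T : Type v} [Semigroup T] (P_T : T → T) (θ : X → T)
    (hθ : ∀ x, θ (P_X x) = P_T (θ x)) {a b : OpTree X} (h : Rel P_X a b) :
    eval P_T θ a = eval P_T θ b := by
  induction h with
  | refl a => rfl
  | symm _ ih => exact ih.symm
  | trans _ _ ih1 ih2 => exact ih1.trans ih2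
  | assoc a b c => exact mul_assoc _ _ _
  | mul_congr _ _ ih1 ih2 => simp [eval, ih1, ih2]
  | op_congr _ ih => simp [eval, ih]
  | op_var x => exact (hθ x).symm

end OpTree


abbrev FOp (X : Type u) (P_X : X → X) : Type u := Quot (OpTree.Rel P_X)

instance instSemigroupFOp {X : Type u} (P_X : X → X) : Semigroup (FOp X P_X) where
  mul a b :=
    Quot.lift₂ (fun u v => Quot.mk _ (OpTree.mul u v))
      (fun u _ _ h => Quot.sound (OpTree.Rel.mul_congr (OpTree.Rel.refl u) h))
      (fun _ _ w h => Quot.sound (OpTree.Rel.mul_congr h (OpTree.Rel.refl w))) a b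
  mul_assoc a b c :=
    Quot.induction_on₃ a b c fun u v w => Quot.sound (OpTree.Rel.assoc u v w)

theorem FOp_mk_mul {X : Type u} {P_X : X → X} (u v : OpTree X) :
    (Quot.mk (OpTree.Rel P_X) u * Quot.mk _ v : FOp X P_X) =
      Quot.mk _ (OpTree.mul u v) := rfl

theorem free_operated_semigroup_over_operated_set_exists
    (X : Type u) (P_X : X → X) :
    ∃ (F : Type u) (sg : Semigroup F) (P_F : F → F) (i : X → F),
      (∀ x : X, i (P_X x) = P_F (i x)) ∧
      ∀ (T : Type v) [Semigroup T], ∀ (P_T : T → T) (θ : X → T),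
        (∀ x : X, θ (P_X x) = P_T (θ x)) →
        ∃! θt : @MulHom F T sg.toMul _,
          (∀ u : F, θt.toFun (P_F u) = P_T (θt.toFun u)) ∧
          (∀ x : X, θt.toFun (i x) = θ x) := by
  classical
  refine ⟨FOp X P_X, inferInstance,
    Quot.map OpTree.op (fun _ _ h => OpTree.Rel.op_congr h),
    fun x => Quot.mk _ (OpTree.var x), ?_, ?_⟩
  · intro x
    exact (Quot.sound (OpTree.Rel.op_var x)).symm
  · intro T _ P_T θ hθ
    refine ⟨⟨Quot.lift (OpTree.eval P_T θ) (fun a b h => OpTree.eval_rel P_T θ hθ h),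
      fun a b => Quot.induction_on₂ a b fun u v => rfl⟩, ⟨?_, ?_⟩, ?_⟩
    · intro u
      exact Quot.induction_on u fun t => rfl
    · intro x; rfl
    · rintro ⟨f, hf⟩ ⟨h1, h2⟩
      ext u
      refine Quot.induction_on u fun t => ?_
      induction t with
      | var x => exact h2 x
      | op s ih =>
          have := h1 (Quot.mk _ s)
          simp only [MulHom.toFun_eq_coe, MulHom.coe_mk] at this h2 ih ⊢
          calc f (Quot.mk _ (OpTree.op s)) = P_T (f (Quot.mk _ s)) := this
            _ = P_T (OpTree.eval P_T θ s) := by rw [ih]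
            _ = OpTree.eval P_T θ (OpTree.op s) := rfl
      | mul s t ihs iht =>
          have := hf (Quot.mk _ s) (Quot.mk _ t)
          simp only [MulHom.toFun_eq_coe, MulHom.coe_mk, FOp_mk_mul] at *
          calc f (Quot.mk _ (OpTree.mul s t))
              = f (Quot.mk _ s) * f (Quot.mk _ t) := this
            _ = OpTree.eval P_T θ s * OpTree.eval P_T θ t := by rw [ihs, iht]
end

section
/- Let k be a field, V and V' vector spaces over k with an injective linear map V ↪ V', and A ↪ B an injective homomorphism of (not necessarily unital) k-algebras. Then the induced algebra homomorphism T̄̃(A ⊕ V) → T̄̃(B ⊕ V') is injective, where T̄̃(A ⊕ V) denotes the quotient of the reduced tensor algebra T̄(A ⊕ V) = ⊕_{n≥1} (A ⊕ V)^{⊗n} by the two-sided ideal generated by the elements a ⊗ b − a·b for a, b ∈ A. -/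
/-! A normal form for `T̄̃(A ⊕ V)`. Let `A⁺` be the unitization of `A` and `T` the tensor algebra
on `A × V`. The generator `(a, v)` acts on `A⁺ ⊗ T` by merging `a` into the first tensor factor and
by prepending `v` to the word obtained by writing that factor out in front of the second one. These
operators satisfy the defining relations, so `T̄̃(A ⊕ V)` acts on `A⁺ ⊗ T`, and `X ↦ X • (1 ⊗ 1)` is
injective: multiplying the two tensor factors out inside the unitization of `T̄̃(A ⊕ V)` gives
`X` back. The construction is natural in `(A, V)`, and over a field the map
`A⁺ ⊗ T(A × V) → B⁺ ⊗ T(B × V')` induced by injective `f` and `g` is injective, hence so is `F`. -/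

/- The non-unital algebra T̄̃(A ⊕ V): the reduced tensor algebra (free non-unital
associative algebra) on the k-module A ⊕ V modulo the relations a ⊗ b = a·b (a, b ∈ A),
realized as a quotient of the non-unital semigroup algebra of the free semigroup on the
set A × V by the ring congruence generated by the k-linearity relations on generators
together with the relations a ⊗ b = a·b; and injectivity of induced maps. -/

namespace Stmt6

variable (k : Type*) [Field k]
variable (A : Type*) [NonUnitalRing A] [Module k A] [SMulCommClass k A A] [IsScalarTower k A A]
variable (V : Type*) [AddCommGroup V] [Module k V]

/-- A generator `c · (a, v)` of the reduced tensor algebra. -/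
noncomputable def gen (a : A) (v : V) (c : k) :
    MonoidAlgebra k (FreeSemigroup (A × V)) :=
  MonoidAlgebra.single (FreeSemigroup.of ((a, v) : A × V)) c

/-- The defining relations of `T̄̃(A ⊕ V)`: `k`-linearity of the generators (making the
quotient the reduced tensor algebra on the module `A ⊕ V`) together with the relations
`a ⊗ b = a·b` for `a, b ∈ A`. -/
noncomputable def rel :
    MonoidAlgebra k (FreeSemigroup (A × V)) → MonoidAlgebra k (FreeSemigroup (A × V)) → Prop :=
  fun x y =>
    (∃ p q : A × V, x = gen k A V (p.1 + q.1) (p.2 + q.2) 1 ∧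
        y = gen k A V p.1 p.2 1 + gen k A V q.1 q.2 1) ∨
    (∃ (c : k) (p : A × V), x = gen k A V (c • p.1) (c • p.2) 1 ∧ y = gen k A V p.1 p.2 c) ∨
    (∃ a b : A, x = gen k A V a 0 1 * gen k A V b 0 1 ∧ y = gen k A V (a * b) 0 1)

/-- The ring congruence generated by the defining relations. -/
noncomputable def con : RingCon (MonoidAlgebra k (FreeSemigroup (A × V))) :=
  ringConGen (rel k A V)

/-- The non-unital algebra `T̄̃(A ⊕ V)`. -/
abbrev TBarTilde := (con k A V).Quotient

/-- The class of a generator in `T̄̃(A ⊕ V)`. -/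
noncomputable def mkGen (a : A) (v : V) (c : k) : TBarTilde k A V :=
  ((gen k A V a v c : MonoidAlgebra k (FreeSemigroup (A × V))) : (con k A V).Quotient)

open TensorProduct

section RingConGen

variable {R : Type*} [NonUnitalNonAssocSemiring R] {r : R → R → Prop}

theorem eq_of_ringConGen {S F : Type*} [NonUnitalNonAssocSemiring S] [FunLike F R S]
    [NonUnitalRingHomClass F R S] (φ : F) (hr : ∀ x y, r x y → φ x = φ y) {x y : R}
    (h : ringConGen r x y) : φ x = φ y := by
  induction h with
  | of x y h => exact hr x y h
  | refl => rfl
  | symm _ ih => exact ih.symm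
  | trans _ _ ih ih' => exact ih.trans ih'
  | add _ _ ih ih' => rw [map_add, map_add, ih, ih']
  | mul _ _ ih ih' => rw [map_mul, map_mul, ih, ih']

theorem ringConGen_smul {K : Type*} [DistribSMul K R] [IsScalarTower K R R]
    (hr : ∀ (c : K) x y, r x y → ringConGen r (c • x) (c • y)) (c : K) {x y : R}
    (h : ringConGen r x y) : ringConGen r (c • x) (c • y) := by
  induction h generalizing c with
  | of x y h => exact hr c x y h
  | refl => exact (ringConGen r).refl _
  | symm _ ih => exact (ringConGen r).symm (ih c)
  | trans _ _ ih ih' => exact (ringConGen r).trans (ih c) (ih' c)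
  | add _ _ ih ih' => rw [smul_add, smul_add]; exact (ringConGen r).add (ih c) (ih' c)
  | mul _ h ih _ => rw [← smul_mul_assoc, ← smul_mul_assoc]; exact (ringConGen r).mul (ih c) h

end RingConGen

noncomputable def unitizationMap {R A B : Type*} [CommSemiring R] [NonUnitalSemiring A]
    [Module R A] [SMulCommClass R A A] [IsScalarTower R A A] [NonUnitalSemiring B] [Module R B]
    [SMulCommClass R B B] [IsScalarTower R B B] (f : A →ₙₐ[R] B) :
    Unitization R A →ₐ[R] Unitization R B :=
  Unitization.lift ((Unitization.inrNonUnitalAlgHom R B).comp f)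

theorem unitizationMap_injective {R A B : Type*} [CommSemiring R] [NonUnitalSemiring A]
    [Module R A] [SMulCommClass R A A] [IsScalarTower R A A] [NonUnitalSemiring B] [Module R B]
    [SMulCommClass R B B] [IsScalarTower R B B] {f : A →ₙₐ[R] B} (hf : Function.Injective f) :
    Function.Injective (unitizationMap f) := by
  intro x y h
  have hfst := congrArg (·.fst) h
  have hsnd := congrArg (·.snd) h
  simp [unitizationMap, Unitization.lift_apply, Unitization.algebraMap_eq_inl] at hfst hsnd
  exact Unitization.ext hfst (hf hsnd)

noncomputable def tensorAlgebraMap {R M N : Type*} [CommSemiring R] [AddCommMonoid M] [Module R M]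
    [AddCommMonoid N] [Module R N] (φ : M →ₗ[R] N) : TensorAlgebra R M →ₐ[R] TensorAlgebra R N :=
  TensorAlgebra.lift R (TensorAlgebra.ι R ∘ₗ φ)

theorem tensorAlgebraMap_injective {R M N : Type*} [Field R] [AddCommGroup M] [Module R M]
    [AddCommGroup N] [Module R N] {φ : M →ₗ[R] N} (hφ : Function.Injective φ) :
    Function.Injective (tensorAlgebraMap φ) := by
  obtain ⟨ψ, hψ⟩ := φ.exists_leftInverse_of_injective (LinearMap.ker_eq_bot.mpr hφ)
  have hinv : (tensorAlgebraMap ψ).comp (tensorAlgebraMap φ) = AlgHom.id R _ := by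
    ext m
    simp [tensorAlgebraMap, ← LinearMap.comp_apply ψ φ, hψ]
  exact Function.LeftInverse.injective (AlgHom.congr_fun hinv)

abbrev FreeAlg := MonoidAlgebra k (FreeSemigroup (A × V))

section

omit [SMulCommClass k A A] [IsScalarTower k A A]

omit [NonUnitalRing A] [Module k A] [AddCommGroup V] [Module k V] in
theorem smul_gen (c d : k) (a : A) (v : V) : c • gen k A V a v d = gen k A V a v (c * d) :=
  MonoidAlgebra.smul_single' c _ d

theorem coe_eq_coe_of_rel {x y : FreeAlg k A V} (h : rel k A V x y) :
    (x : TBarTilde k A V) = y :=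
  (RingCon.eq _).mpr (RingConGen.Rel.of _ _ h)

theorem mkGen_add (a a' : A) (v v' : V) :
    mkGen k A V (a + a') (v + v') 1 = mkGen k A V a v 1 + mkGen k A V a' v' 1 :=
  coe_eq_coe_of_rel k A V (Or.inl ⟨(a, v), (a', v'), rfl, rfl⟩)

theorem mkGen_eq_smul_one (a : A) (v : V) (c : k) :
    mkGen k A V a v c = mkGen k A V (c • a) (c • v) 1 :=
  (coe_eq_coe_of_rel k A V (Or.inr (Or.inl ⟨c, (a, v), rfl, rfl⟩))).symm

theorem mkGen_mul_mkGen (a b : A) :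
    mkGen k A V a 0 1 * mkGen k A V b 0 1 = mkGen k A V (a * b) 0 1 :=
  coe_eq_coe_of_rel k A V (Or.inr (Or.inr ⟨a, b, rfl, rfl⟩))

@[elab_as_elim]
theorem TBarTilde.induction_on {P : TBarTilde k A V → Prop} (X : TBarTilde k A V)
    (hgen : ∀ a v c, P (mkGen k A V a v c)) (hadd : ∀ X Y, P X → P Y → P (X + Y))
    (hmul : ∀ X Y, P X → P Y → P (X * Y)) : P X := by
  obtain ⟨x, rfl⟩ := Quotient.mk''_surjective X
  induction x using MonoidAlgebra.induction_linear with
  | zero => exact (by simpa [mkGen, gen] using hgen 0 0 0 : P 0)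
  | add x y hx hy => exact hadd _ _ hx hy
  | single w c =>
    induction w using FreeSemigroup.recOnMul generalizing c with
    | ih1 p => exact hgen p.1 p.2 c
    | ih2 p w _ ih =>
      have hw : MonoidAlgebra.single (FreeSemigroup.of p * w) c
          = gen k A V p.1 p.2 c * .single w 1 := by
        rw [gen, MonoidAlgebra.single_mul_single, mul_one]
      rw [hw]
      exact hmul _ _ (hgen p.1 p.2 c) (ih 1)

end

section

omit [SMulCommClass k A A]

theorem rel_smul (c : k) (x y : FreeAlg k A V) (h : rel k A V x y) :
    con k A V (c • x) (c • y) := by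
  refine (RingCon.eq _).mp ?_
  rcases h with ⟨p, q, rfl, rfl⟩ | ⟨d, p, rfl, rfl⟩ | ⟨a, b, rfl, rfl⟩
  · rw [smul_add, smul_gen, smul_gen, smul_gen, mul_one, RingCon.coe_add]
    change mkGen k A V _ _ c = mkGen k A V _ _ c + mkGen k A V _ _ c
    rw [mkGen_eq_smul_one _ _ _ _ _ c, mkGen_eq_smul_one k A V p.1, mkGen_eq_smul_one k A V q.1,
      smul_add, smul_add, mkGen_add]
  · rw [smul_gen, smul_gen, mul_one]
    change mkGen k A V _ _ c = mkGen k A V _ _ (c * d)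
    rw [mkGen_eq_smul_one _ _ _ _ _ c, mkGen_eq_smul_one _ _ _ _ _ (c * d), smul_smul, smul_smul]
  · rw [← smul_mul_assoc, smul_gen, smul_gen, mul_one, RingCon.coe_mul]
    change mkGen k A V a 0 c * mkGen k A V b 0 1 = mkGen k A V (a * b) 0 c
    rw [mkGen_eq_smul_one k A V a, mkGen_eq_smul_one k A V (a * b), smul_zero, mkGen_mul_mkGen,
      smul_mul_assoc]

noncomputable instance : SMul k (TBarTilde k A V) :=
  ⟨fun c => Quotient.map' (c • ·) fun _ _ => ringConGen_smul (rel_smul k A V) c⟩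

theorem coe_smul (c : k) (x : FreeAlg k A V) :
    ((c • x : FreeAlg k A V) : TBarTilde k A V) = c • (x : TBarTilde k A V) :=
  rfl

noncomputable instance : Module k (TBarTilde k A V) :=
  Function.Surjective.module k ⟨⟨Quotient.mk'', rfl⟩, fun _ _ => rfl⟩ Quotient.mk''_surjective
    (coe_smul k A V)

instance : IsScalarTower k (TBarTilde k A V) (TBarTilde k A V) :=
  ⟨fun c X Y => Quotient.inductionOn₂' X Y fun x y =>
    congrArg Quotient.mk'' (smul_mul_assoc c x y)⟩

instance : SMulCommClass k (TBarTilde k A V) (TBarTilde k A V) :=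
  ⟨fun c X Y => Quotient.inductionOn₂' X Y fun x y =>
    congrArg Quotient.mk'' (mul_smul_comm c x y).symm⟩

theorem mkGen_eq_smul (a : A) (v : V) (c : k) : mkGen k A V a v c = c • mkGen k A V a v 1 := by
  rw [mkGen, mkGen, ← coe_smul, smul_gen, mul_one]

end

/-- `u ⊗ t` stands for the word `u t` whose leading letter `u ∈ A⁺` can still absorb products. -/
abbrev NormalForms := Unitization k A ⊗[k] TensorAlgebra k (A × V)

noncomputable def collapse : Unitization k A →ₗ[k] TensorAlgebra k (A × V) :=
  Algebra.linearMap k _ ∘ₗ (Unitization.fstHom k A).toLinearMap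
    + TensorAlgebra.ι k ∘ₗ LinearMap.inl k A V ∘ₗ Unitization.sndHom k k A

theorem collapse_apply (u : Unitization k A) :
    collapse k A V u = algebraMap k _ u.fst + TensorAlgebra.ι k (u.snd, 0) := rfl

noncomputable def flush : NormalForms k A V →ₗ[k] TensorAlgebra k (A × V) :=
  TensorProduct.lift (LinearMap.mul k _ ∘ₗ collapse k A V)

@[simp]
theorem flush_tmul (u : Unitization k A) (t : TensorAlgebra k (A × V)) :
    flush k A V (u ⊗ₜ t) = collapse k A V u * t := rfl

noncomputable def letterAct : (A × V) →ₗ[k] Module.End k (NormalForms k A V) where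
  toFun p := LinearMap.mulLeft k ((p.1 : Unitization k A) ⊗ₜ 1)
    + Algebra.TensorProduct.includeRight.toLinearMap
        ∘ₗ LinearMap.mulLeft k (TensorAlgebra.ι k (LinearMap.inr k A V p.2)) ∘ₗ flush k A V
  map_add' p q := LinearMap.ext fun m => by
    simp only [LinearMap.add_apply, LinearMap.comp_apply, LinearMap.mulLeft_apply,
      AlgHom.toLinearMap_apply, Algebra.TensorProduct.includeRight_apply, Prod.fst_add,
      Prod.snd_add, map_add, Unitization.inr_add, add_tmul, add_mul]
    abel
  map_smul' c p := LinearMap.ext fun m => by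
    simp only [LinearMap.add_apply, LinearMap.comp_apply, LinearMap.mulLeft_apply,
      AlgHom.toLinearMap_apply, Algebra.TensorProduct.includeRight_apply, Prod.smul_fst,
      Prod.smul_snd, map_smul, Unitization.inr_smul, RingHom.id_apply, LinearMap.smul_apply,
      ← smul_tmul', smul_mul_assoc, smul_add]

theorem letterAct_apply (p : A × V) (m : NormalForms k A V) :
    letterAct k A V p m = ((p.1 : Unitization k A) ⊗ₜ 1) * m
      + 1 ⊗ₜ (TensorAlgebra.ι k (LinearMap.inr k A V p.2) * flush k A V m) := rfl

theorem letterAct_mul (a b : A) :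
    letterAct k A V (a, 0) * letterAct k A V (b, 0) = letterAct k A V (a * b, 0) := by
  refine LinearMap.ext fun m => ?_
  simp only [Module.End.mul_apply, letterAct_apply, map_zero, zero_mul, tmul_zero, add_zero,
    ← mul_assoc, Algebra.TensorProduct.tmul_mul_tmul, mul_one, Unitization.inr_mul]

noncomputable def freeAct : FreeAlg k A V →ₙₐ[k] Module.End k (NormalForms k A V) :=
  MonoidAlgebra.liftMagma k (FreeSemigroup.lift (letterAct k A V))

theorem freeAct_gen (a : A) (v : V) (c : k) :
    freeAct k A V (gen k A V a v c) = c • letterAct k A V (a, v) := by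
  simp [freeAct, gen]

theorem freeAct_eq_of_con {x y : FreeAlg k A V} (h : con k A V x y) : freeAct k A V x = freeAct k A V y := by
  refine eq_of_ringConGen (freeAct k A V) ?_ h
  rintro x y (⟨p, q, rfl, rfl⟩ | ⟨c, p, rfl, rfl⟩ | ⟨a, b, rfl, rfl⟩)
  · simp only [freeAct_gen, one_smul, map_add]
    exact map_add (letterAct k A V) p q
  · simp only [freeAct_gen, one_smul, ← map_smul, Prod.smul_mk]
  · simp only [map_mul, freeAct_gen, one_smul, letterAct_mul]

noncomputable def act : TBarTilde k A V → Module.End k (NormalForms k A V) :=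
  Quotient.lift (freeAct k A V) fun _ _ => freeAct_eq_of_con k A V

theorem act_add (X Y : TBarTilde k A V) : act k A V (X + Y) = act k A V X + act k A V Y :=
  Quotient.inductionOn₂' X Y fun x y => map_add (freeAct k A V) x y

theorem act_mul (X Y : TBarTilde k A V) : act k A V (X * Y) = act k A V X * act k A V Y :=
  Quotient.inductionOn₂' X Y fun x y => map_mul (freeAct k A V) x y

theorem act_mkGen (a : A) (v : V) (c : k) :
    act k A V (mkGen k A V a v c) = c • letterAct k A V (a, v) :=
  freeAct_gen k A V a v c

noncomputable def nf (X : TBarTilde k A V) : NormalForms k A V := act k A V X (1 ⊗ₜ 1)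

noncomputable def letterHom : (A × V) →ₗ[k] Unitization k (TBarTilde k A V) where
  toFun p := mkGen k A V p.1 p.2 1
  map_add' p q := by rw [← Unitization.inr_add, ← mkGen_add]; rfl
  map_smul' c p := by
    change (mkGen k A V (c • p.1) (c • p.2) 1 : Unitization k (TBarTilde k A V))
      = c • (mkGen k A V p.1 p.2 1 : Unitization k (TBarTilde k A V))
    rw [← mkGen_eq_smul_one, mkGen_eq_smul, Unitization.inr_smul]

noncomputable def letterAlgHom : A →ₙₐ[k] Unitization k (TBarTilde k A V) where
  __ := letterHom k A V ∘ₗ LinearMap.inl k A V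
  map_zero' := map_zero _
  map_mul' a b := by
    simp only [LinearMap.toFun_eq_coe, LinearMap.coe_comp, Function.comp_apply,
      LinearMap.inl_apply]
    exact (congrArg _ (mkGen_mul_mkGen k A V a b)).symm.trans (Unitization.inr_mul _ _ _)

noncomputable def readout : NormalForms k A V →ₗ[k] Unitization k (TBarTilde k A V) :=
  TensorProduct.lift ((Algebra.lmul k _).toLinearMap.compl₁₂
    (Unitization.lift (letterAlgHom k A V)).toLinearMap
    (TensorAlgebra.lift k (letterHom k A V)).toLinearMap)

theorem readout_tmul (u : Unitization k A) (t : TensorAlgebra k (A × V)) :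
    readout k A V (u ⊗ₜ t)
      = Unitization.lift (letterAlgHom k A V) u * TensorAlgebra.lift k (letterHom k A V) t :=
  rfl

theorem lift_letterHom_collapse (u : Unitization k A) :
    TensorAlgebra.lift k (letterHom k A V) (collapse k A V u)
      = Unitization.lift (letterAlgHom k A V) u := by
  simp [collapse_apply, Unitization.lift_apply, letterAlgHom]

theorem readout_letterAct (p : A × V) (m : NormalForms k A V) :
    readout k A V (letterAct k A V p m) = letterHom k A V p * readout k A V m := by
  induction m using TensorProduct.induction_on with
  | zero => simp
  | add m m' hm hm' => rw [map_add, map_add, hm, hm', map_add, mul_add]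
  | tmul u t =>
    have hp : letterHom k A V p = letterAlgHom k A V p.1 + letterHom k A V (0, p.2) := by
      change _ = letterHom k A V (p.1, 0) + _
      rw [← map_add, Prod.mk_add_mk, add_zero, zero_add]
    have hinr : Unitization.lift (letterAlgHom k A V) (p.1 : Unitization k A) = letterAlgHom k A V p.1 := by
      simp [Unitization.lift_apply]
    simp only [letterAct_apply, Algebra.TensorProduct.tmul_mul_tmul, one_mul, map_add,
      readout_tmul, flush_tmul, map_mul, lift_letterHom_collapse, map_one, hinr,
      TensorAlgebra.lift_ι_apply, LinearMap.inr_apply]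
    rw [hp, add_mul, mul_assoc]

theorem readout_act (X : TBarTilde k A V) (m : NormalForms k A V) :
    readout k A V (act k A V X m) = X * readout k A V m := by
  induction X using TBarTilde.induction_on generalizing m with
  | hgen a v c =>
    rw [act_mkGen, LinearMap.smul_apply, map_smul, readout_letterAct, mkGen_eq_smul,
      Unitization.inr_smul, Algebra.smul_mul_assoc (A := Unitization k (TBarTilde k A V))]
    rfl
  | hadd X Y hX hY =>
    rw [act_add, LinearMap.add_apply, map_add, hX, hY, Unitization.inr_add, add_mul]
  | hmul X Y hX hY => rw [act_mul, Module.End.mul_apply, hX, hY, Unitization.inr_mul, mul_assoc]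

theorem readout_nf (X : TBarTilde k A V) : readout k A V (nf k A V X) = X := by
  rw [nf, readout_act, readout_tmul, map_one, map_one, mul_one, mul_one]

theorem nf_injective : Function.Injective (nf k A V) :=
  fun X Y h => Unitization.inr_injective <| by rw [← readout_nf, h, readout_nf]

section Naturality

variable {A V} {B V' : Type*} [NonUnitalRing B] [Module k B] [SMulCommClass k B B]
  [IsScalarTower k B B] [AddCommGroup V'] [Module k V'] (f : A →ₙₐ[k] B) (g : V →ₗ[k] V')

noncomputable def mapNF : NormalForms k A V →ₗ[k] NormalForms k B V' :=
  TensorProduct.map (unitizationMap f).toLinearMap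
    (tensorAlgebraMap ((f : A →ₗ[k] B).prodMap g)).toLinearMap

theorem mapNF_tmul (u : Unitization k A) (t : TensorAlgebra k (A × V)) :
    mapNF k f g (u ⊗ₜ t) = unitizationMap f u ⊗ₜ tensorAlgebraMap ((f : A →ₗ[k] B).prodMap g) t :=
  rfl

theorem tensorAlgebraMap_collapse (u : Unitization k A) :
    tensorAlgebraMap ((f : A →ₗ[k] B).prodMap g) (collapse k A V u)
      = collapse k B V' (unitizationMap f u) := by
  simp [tensorAlgebraMap, unitizationMap, collapse_apply, Unitization.lift_apply,
    Unitization.algebraMap_eq_inl]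

theorem mapNF_letterAct (p : A × V) (m : NormalForms k A V) :
    mapNF k f g (letterAct k A V p m) = letterAct k B V' (f p.1, g p.2) (mapNF k f g m) := by
  induction m using TensorProduct.induction_on with
  | zero => simp
  | add m m' hm hm' => rw [map_add, map_add, hm, hm', map_add, map_add]
  | tmul u t =>
    simp only [letterAct_apply, Algebra.TensorProduct.tmul_mul_tmul, one_mul, map_add, mapNF_tmul,
      flush_tmul, map_mul, map_one, tensorAlgebraMap_collapse]
    simp [tensorAlgebraMap, unitizationMap, Unitization.lift_apply]

theorem mapNF_act (F : TBarTilde k A V → TBarTilde k B V')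
    (hadd : ∀ x y, F (x + y) = F x + F y) (hmul : ∀ x y, F (x * y) = F x * F y)
    (hF : ∀ (a : A) (v : V) (c : k), F (mkGen k A V a v c) = mkGen k B V' (f a) (g v) c)
    (X : TBarTilde k A V) (m : NormalForms k A V) :
    mapNF k f g (act k A V X m) = act k B V' (F X) (mapNF k f g m) := by
  induction X using TBarTilde.induction_on generalizing m with
  | hgen a v c =>
    rw [hF, act_mkGen, act_mkGen, LinearMap.smul_apply, LinearMap.smul_apply, map_smul,
      mapNF_letterAct]
  | hadd X Y hX hY =>
    rw [hadd, act_add, act_add, LinearMap.add_apply, LinearMap.add_apply, map_add, hX, hY]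
  | hmul X Y hX hY => rw [hmul, act_mul, act_mul, Module.End.mul_apply, hX, hY]; rfl

theorem mapNF_nf (F : TBarTilde k A V → TBarTilde k B V')
    (hadd : ∀ x y, F (x + y) = F x + F y) (hmul : ∀ x y, F (x * y) = F x * F y)
    (hF : ∀ (a : A) (v : V) (c : k), F (mkGen k A V a v c) = mkGen k B V' (f a) (g v) c)
    (X : TBarTilde k A V) :
    mapNF k f g (nf k A V X) = nf k B V' (F X) := by
  rw [nf, mapNF_act k f g F hadd hmul hF, mapNF_tmul, map_one, map_one, nf]

theorem mapNF_injective (hf : Function.Injective f) (hg : Function.Injective g) :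
    Function.Injective (mapNF k f g) :=
  TensorProduct.map_injective_of_flat_flat _ _ (unitizationMap_injective hf)
    (tensorAlgebraMap_injective (Prod.map_injective.mpr ⟨hf, hg⟩))

end Naturality

/-- If `g : V ↪ V'` is an injective linear map and `f : A ↪ B` an injective
homomorphism of (not necessarily unital) `k`-algebras, then the induced algebra
homomorphism `T̄̃(A ⊕ V) → T̄̃(B ⊕ V')` — i.e. the additive and multiplicative map sending
the class of `c · (a, v)` to the class of `c · (f a, g v)` — is injective. -/
theorem induced_injective
    {k : Type*} [Field k]
    {A B : Type*} [NonUnitalRing A] [Module k A] [SMulCommClass k A A] [IsScalarTower k A A]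
    [NonUnitalRing B] [Module k B] [SMulCommClass k B B] [IsScalarTower k B B]
    {V V' : Type*} [AddCommGroup V] [Module k V] [AddCommGroup V'] [Module k V']
    (f : A →ₙₐ[k] B) (hf : Function.Injective f)
    (g : V →ₗ[k] V') (hg : Function.Injective g)
    (F : TBarTilde k A V → TBarTilde k B V')
    (hadd : ∀ x y, F (x + y) = F x + F y)
    (hmul : ∀ x y, F (x * y) = F x * F y)
    (hF : ∀ (a : A) (v : V) (c : k), F (mkGen k A V a v c) = mkGen k B V' (f a) (g v) c) :
    Function.Injective F := by
  intro X Y h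
  apply nf_injective k A V
  apply mapNF_injective k f g hf hg
  rw [mapNF_nf k f g F hadd hmul hF, mapNF_nf k f g F hadd hmul hF, h]

end Stmt6
end

section
/- Let k be a field, V ↪ V' an injective linear map of k-vector spaces, and A ↪ B an injective homomorphism of unital k-algebras. Then the induced homomorphism of unital algebras T̂(A ⊕ V) → T̂(B ⊕ V') is injective, where T̂(A ⊕ V) := T(A ⊕ V)/⟨a ⊗ b − a·b, 1_A − 1_{T(A⊕V)} : a, b ∈ A⟩. -/
/- The unital algebra T̂(A ⊕ V) := T(A ⊕ V)/⟨a ⊗ b − a·b, 1_A − 1⟩ and injectivity of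
induced maps. -/

set_option maxHeartbeats 1000000
set_option synthInstance.maxHeartbeats 1000000

namespace Stmt7

variable (k : Type*) [Field k]
variable (A : Type*) [Ring A] [Algebra k A] (V : Type*) [AddCommGroup V] [Module k V]

/-- The defining relation of `T̂(A ⊕ V)` inside the tensor algebra `T(A ⊕ V)`:
`a ⊗ b ∼ a·b` for `a, b ∈ A`, and `1_A ∼ 1`. -/
def rel : TensorAlgebra k (A × V) → TensorAlgebra k (A × V) → Prop := fun x y =>
  (∃ a b : A, x = TensorAlgebra.ι k ((a, 0) : A × V) * TensorAlgebra.ι k ((b, 0) : A × V) ∧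
      y = TensorAlgebra.ι k ((a * b, 0) : A × V)) ∨
    (x = TensorAlgebra.ι k (((1 : A), 0) : A × V) ∧ y = 1)

/-- The unital algebra `T̂(A ⊕ V)`. -/
abbrev THat := RingQuot (rel k A V)

/-- The canonical map `A ⊕ V → T̂(A ⊕ V)`. -/
noncomputable def incl (a : A) (v : V) : THat k A V :=
  RingQuot.mkAlgHom k (rel k A V) (TensorAlgebra.ι k ((a, v) : A × V))

open TensorProduct

noncomputable section Aux

/-- The tensor algebra on `V ⊗ A`. -/
abbrev TW := TensorAlgebra k (V ⊗[k] A)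

/-- The "Fock space" `A ⊗ T(V ⊗ A)`, a linear model for `T̂(A ⊕ V)`. -/
abbrev DD := A ⊗[k] TW k A V

variable {A V} in
lemma incl_split (a : A) (v : V) :
    incl k A V a v = incl k A V a 0 + incl k A V 0 v := by
  unfold incl
  rw [show ((a, v) : A × V) = (a, 0) + (0, v) by simp, map_add, map_add]

variable {A V} in
lemma incl_add_left (a a' : A) : incl k A V (a + a') 0 = incl k A V a 0 + incl k A V a' 0 := by
  unfold incl
  rw [show (((a + a'), 0) : A × V) = (a, 0) + (a', 0) by simp, map_add, map_add]

variable {A V} in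
lemma incl_smul_left (c : k) (a : A) : incl k A V (c • a) 0 = c • incl k A V a 0 := by
  unfold incl
  rw [show (((c • a), 0) : A × V) = c • (a, 0) by simp [Prod.smul_mk], map_smul, map_smul]

variable {A V} in
lemma incl_add_right (v v' : V) : incl k A V 0 (v + v') = incl k A V 0 v + incl k A V 0 v' := by
  unfold incl
  rw [show ((0, v + v') : A × V) = (0, v) + (0, v') by simp, map_add, map_add]

variable {A V} in
lemma incl_smul_right (c : k) (v : V) : incl k A V 0 (c • v) = c • incl k A V 0 v := by
  unfold incl
  rw [show ((0, c • v) : A × V) = c • (0, v) by simp [Prod.smul_mk], map_smul, map_smul]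

variable {A V} in
lemma incl_mul (a b : A) : incl k A V a 0 * incl k A V b 0 = incl k A V (a * b) 0 := by
  have h := RingQuot.mkAlgHom_rel k
    (s := rel k A V) (Or.inl ⟨a, b, rfl, rfl⟩)
  simpa [incl, map_mul] using h

variable {A V} in
lemma incl_one : incl k A V 1 0 = 1 := by
  have h := RingQuot.mkAlgHom_rel k (s := rel k A V) (Or.inr ⟨rfl, rfl⟩)
  simpa [incl, map_one] using h

/-- Left multiplication of `A` on the first factor of `DD`. -/
def actA : A →ₗ[k] Module.End k (DD k A V) :=
  (LinearMap.rTensorHom (TW k A V)).comp (Algebra.lmul k A).toLinearMap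

@[simp] lemma actA_tmul (a a0 : A) (t : TW k A V) :
    actA k A V a (a0 ⊗ₜ t) = (a * a0) ⊗ₜ t := by
  simp [actA]

/-- Multiplication `T(W) ⊗ T(W) → T(W)` followed by `t ↦ 1 ⊗ t`. -/
def muD : (TW k A V) ⊗[k] (TW k A V) →ₗ[k] DD k A V :=
  (TensorProduct.mk k A (TW k A V) 1).comp (LinearMap.mul' k (TW k A V))

/-- Action of `V` on `DD`: `a₀ ⊗ t ↦ 1 ⊗ (ι(v ⊗ a₀) * t)`. -/
def actV : V →ₗ[k] Module.End k (DD k A V) :=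
  (LinearMap.llcomp k (DD k A V) ((TW k A V) ⊗[k] (TW k A V)) (DD k A V) (muD k A V)).comp
    ((LinearMap.rTensorHom (TW k A V)).comp
      ((LinearMap.llcomp k A (V ⊗[k] A) (TW k A V) (TensorAlgebra.ι k)).comp
        (TensorProduct.mk k V A)))

@[simp] lemma actV_tmul (v : V) (a0 : A) (t : TW k A V) :
    actV k A V v (a0 ⊗ₜ t) = (1 : A) ⊗ₜ (TensorAlgebra.ι k (v ⊗ₜ a0) * t) := by
  simp [actV, muD]

/-- The generating linear map `A × V → End(DD)`. -/
def Lgen : A × V →ₗ[k] Module.End k (DD k A V) :=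
  (actA k A V).comp (LinearMap.fst k A V) + (actV k A V).comp (LinearMap.snd k A V)

lemma lifted_rel : ∀ ⦃x y : TensorAlgebra k (A × V)⦄, rel k A V x y →
    TensorAlgebra.lift k (Lgen k A V) x = TensorAlgebra.lift k (Lgen k A V) y := by
  rintro x y (⟨a, b, rfl, rfl⟩ | ⟨rfl, rfl⟩) <;>
  · apply LinearMap.ext; intro d
    induction d using TensorProduct.induction_on with
    | zero => simp
    | tmul a0 t =>
      simp [Lgen, Module.End.mul_apply, mul_assoc]
    | add d₁ d₂ h₁ h₂ =>
      simp only [map_add, h₁, h₂]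

/-- The representation of `T̂(A ⊕ V)` on `DD`. -/
def rho : THat k A V →ₐ[k] Module.End k (DD k A V) :=
  RingQuot.liftAlgHom k ⟨TensorAlgebra.lift k (Lgen k A V), lifted_rel k A V⟩

variable {A V} in
lemma rho_incl (a : A) (v : V) :
    rho k A V (incl k A V a v) = actA k A V a + actV k A V v := by
  rw [incl, rho, RingQuot.liftAlgHom_mkAlgHom_apply]
  simp [Lgen]

/-- The algebra map `T(V ⊗ A) → T̂(A ⊕ V)` sending `ι(v ⊗ a)` to `incl 0 v * incl a 0`. -/
def muTW : TW k A V →ₐ[k] THat k A V :=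
  TensorAlgebra.lift k <| TensorProduct.lift <| LinearMap.mk₂ k
    (fun v a => incl k A V 0 v * incl k A V a 0)
    (fun v v' a => by simp only [incl_add_right, add_mul])
    (fun c v a => by simp only [incl_smul_right, smul_mul_assoc])
    (fun v a a' => by simp only [incl_add_left, mul_add])
    (fun c v a => by simp only [incl_smul_left, mul_smul_comm])

@[simp] lemma muTW_ι (v : V) (a : A) :
    muTW k A V (TensorAlgebra.ι k (v ⊗ₜ a)) = incl k A V 0 v * incl k A V a 0 := by
  simp [muTW]

/-- The comparison map `DD → T̂(A ⊕ V)`, `a ⊗ t ↦ incl a 0 * μ(t)`. -/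
def Theta : DD k A V →ₗ[k] THat k A V :=
  TensorProduct.lift <| LinearMap.mk₂ k
    (fun a t => incl k A V a 0 * muTW k A V t)
    (fun a a' t => by simp only [incl_add_left, add_mul])
    (fun c a t => by simp only [incl_smul_left, smul_mul_assoc])
    (fun a t t' => by simp only [map_add, mul_add])
    (fun c a t => by simp only [map_smul, mul_smul_comm])

@[simp] lemma Theta_tmul (a : A) (t : TW k A V) :
    Theta k A V (a ⊗ₜ t) = incl k A V a 0 * muTW k A V t := by
  simp [Theta]

variable {A V} in
lemma Theta_rho (x : THat k A V) (d : DD k A V) :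
    Theta k A V (rho k A V x d) = x * Theta k A V d := by
  obtain ⟨y, rfl⟩ := RingQuot.mkAlgHom_surjective k (rel k A V) x
  induction y using TensorAlgebra.induction generalizing d with
  | algebraMap r =>
    rw [AlgHom.commutes, AlgHom.commutes, Module.algebraMap_end_apply, map_smul,
      Algebra.smul_def]
  | ι x =>
    obtain ⟨a, v⟩ := x
    rw [show (RingQuot.mkAlgHom k (rel k A V)) (TensorAlgebra.ι k (a, v)) = incl k A V a v
      from rfl, rho_incl]
    induction d using TensorProduct.induction_on with
    | zero => simp
    | tmul a0 t =>
      rw [LinearMap.add_apply, actA_tmul, actV_tmul, map_add, Theta_tmul, Theta_tmul,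
        Theta_tmul, incl_one, one_mul, map_mul, muTW_ι, incl_split k a v, add_mul,
        ← incl_mul k a a0, mul_assoc, mul_assoc]
    | add d₁ d₂ h₁ h₂ =>
      simp only [map_add, h₁, h₂, mul_add]
  | mul a b ha hb =>
    simp only [map_mul, Module.End.mul_apply, ha, hb, mul_assoc]
  | add a b ha hb =>
    simp only [map_add, LinearMap.add_apply, ha, hb, add_mul]

variable {A V} in
lemma Theta_rho_one (x : THat k A V) :
    Theta k A V (rho k A V x ((1 : A) ⊗ₜ (1 : TW k A V))) = x := by
  rw [Theta_rho, Theta_tmul, incl_one, map_one, one_mul, mul_one]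

end Aux

section Natural

variable {k A V}
variable {B : Type*} [Ring B] [Algebra k B]
variable {V' : Type*} [AddCommGroup V'] [Module k V']

/-- Functoriality of the tensor algebra `T(V ⊗ A)` in the linear map on `V ⊗ A`. -/
noncomputable def TAmap (h : (V ⊗[k] A) →ₗ[k] (V' ⊗[k] B)) : TW k A V →ₐ[k] TW k B V' :=
  TensorAlgebra.lift k ((TensorAlgebra.ι k).comp h)

@[simp] lemma TAmap_ι (h : (V ⊗[k] A) →ₗ[k] (V' ⊗[k] B)) (w : V ⊗[k] A) :
    TAmap h (TensorAlgebra.ι k w) = TensorAlgebra.ι k (h w) := by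
  simp [TAmap]

lemma TAmap_comp (h' : (V' ⊗[k] B) →ₗ[k] (V ⊗[k] A)) (h : (V ⊗[k] A) →ₗ[k] (V' ⊗[k] B)) :
    (TAmap h').comp (TAmap h) = TAmap (h'.comp h) := by
  apply TensorAlgebra.hom_ext
  apply LinearMap.ext; intro w
  simp

lemma TAmap_id : TAmap (LinearMap.id : (V ⊗[k] A) →ₗ[k] (V ⊗[k] A)) = AlgHom.id k (TW k A V) := by
  apply TensorAlgebra.hom_ext
  apply LinearMap.ext; intro w
  simp

/-- The comparison map `DD k A V → DD k B V'`. -/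
noncomputable def Gmap (f : A →ₗ[k] B) (g : V →ₗ[k] V') : DD k A V →ₗ[k] DD k B V' :=
  TensorProduct.map f (TAmap (TensorProduct.map g f)).toLinearMap

@[simp] lemma Gmap_tmul (f : A →ₗ[k] B) (g : V →ₗ[k] V') (a : A) (t : TW k A V) :
    Gmap f g (a ⊗ₜ t) = f a ⊗ₜ TAmap (TensorProduct.map g f) t := by
  simp [Gmap]

lemma rho_natural (f : A →ₐ[k] B) (g : V →ₗ[k] V')
    (F : THat k A V →ₐ[k] THat k B V')
    (hF : ∀ (a : A) (v : V), F (incl k A V a v) = incl k B V' (f a) (g v))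
    (x : THat k A V) (d : DD k A V) :
    rho k B V' (F x) (Gmap f.toLinearMap g d) = Gmap f.toLinearMap g (rho k A V x d) := by
  obtain ⟨y, rfl⟩ := RingQuot.mkAlgHom_surjective k (rel k A V) x
  induction y using TensorAlgebra.induction generalizing d with
  | algebraMap r =>
    simp only [AlgHom.commutes, Module.algebraMap_end_apply, map_smul]
  | ι x =>
    obtain ⟨a, v⟩ := x
    rw [show (RingQuot.mkAlgHom k (rel k A V)) (TensorAlgebra.ι k (a, v)) = incl k A V a v
      from rfl, hF, rho_incl, rho_incl]
    induction d using TensorProduct.induction_on with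
    | zero => simp
    | tmul a0 t =>
      simp only [LinearMap.add_apply, map_add, Gmap_tmul, actA_tmul, actV_tmul,
        AlgHom.toLinearMap_apply, map_mul, map_one, muTW_ι, TAmap_ι, TensorProduct.map_tmul]
    | add d₁ d₂ h₁ h₂ =>
      simp only [map_add, h₁, h₂]
  | mul a b ha hb =>
    simp only [map_mul, Module.End.mul_apply, ha, hb]
  | add a b ha hb =>
    simp only [map_add, LinearMap.add_apply, ha, hb]

lemma Gmap_injective (f : A →ₗ[k] B) (hf : Function.Injective f)
    (g : V →ₗ[k] V') (hg : Function.Injective g) :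
    Function.Injective (Gmap (k := k) f g) := by
  obtain ⟨p, hp⟩ := f.exists_leftInverse_of_injective (LinearMap.ker_eq_bot.mpr hf)
  obtain ⟨q, hq⟩ := g.exists_leftInverse_of_injective (LinearMap.ker_eq_bot.mpr hg)
  have key : (Gmap p q).comp (Gmap f g) = LinearMap.id := by
    unfold Gmap
    rw [← TensorProduct.map_comp, ← AlgHom.comp_toLinearMap, TAmap_comp,
      ← TensorProduct.map_comp, hp, hq, TensorProduct.map_id, TAmap_id,
      AlgHom.toLinearMap_id, TensorProduct.map_id]
  intro d d' h
  have := congrArg (Gmap p q) h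
  simpa using congrArg (fun z => z) (by
    have h1 : (Gmap p q) ((Gmap f g) d) = d := by rw [← LinearMap.comp_apply, key]; rfl
    have h2 : (Gmap p q) ((Gmap f g) d') = d' := by rw [← LinearMap.comp_apply, key]; rfl
    rw [h1, h2] at this
    exact this)

end Natural

/-- If `g : V ↪ V'` is an injective linear map and `f : A ↪ B` an injective
homomorphism of unital `k`-algebras, then the induced homomorphism of unital algebras
`T̂(A ⊕ V) → T̂(B ⊕ V')` (i.e. the algebra homomorphism sending the class of `ι(a, v)` to
the class of `ι(f a, g v)`) is injective. -/
theorem induced_injective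
    {k : Type*} [Field k]
    {A B : Type*} [Ring A] [Algebra k A] [Ring B] [Algebra k B]
    {V V' : Type*} [AddCommGroup V] [Module k V] [AddCommGroup V'] [Module k V']
    (f : A →ₐ[k] B) (hf : Function.Injective f)
    (g : V →ₗ[k] V') (hg : Function.Injective g)
    (F : THat k A V →ₐ[k] THat k B V')
    (hF : ∀ (a : A) (v : V), F (incl k A V a v) = incl k B V' (f a) (g v)) :
    Function.Injective F := by
  intro x₁ x₂ hx
  have e : rho k B V' (F x₁) (Gmap f.toLinearMap g ((1 : A) ⊗ₜ (1 : TW k A V)))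
      = rho k B V' (F x₂) (Gmap f.toLinearMap g ((1 : A) ⊗ₜ (1 : TW k A V))) := by rw [hx]
  rw [rho_natural f g F hF, rho_natural f g F hF] at e
  have e2 := Gmap_injective f.toLinearMap hf g hg e
  calc x₁ = Theta k A V (rho k A V x₁ ((1 : A) ⊗ₜ (1 : TW k A V))) := (Theta_rho_one k x₁).symm
    _ = Theta k A V (rho k A V x₂ ((1 : A) ⊗ₜ (1 : TW k A V))) := by rw [e2]
    _ = x₂ := Theta_rho_one k x₂

end Stmt7
end
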